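/- Let S, Ŝ, W be symmetric positive definite n×n real matrices satisfying c·Ŝ ≤ S ≤ C·Ŝ and e·W ≤ Ŝ ≤ E·W with positive constants c, C, e, E. For γ ≥ 0, define S_γ := (S⁻¹ + γW⁻¹)⁻¹ and Ŝ_γ := (Ŝ⁻¹ + γW⁻¹)⁻¹. Then every eigenvalue λ of Ŝ_γ⁻¹ S_γ satisfies λ ≥ (1 + γe)/(max(1, 1/c) + γe). -/

import Mathlib

/-!
Put `y := Sγ x`. The eigen-equation says `Ŝγ⁻¹ y = λ Sγ⁻¹ y`, so
`λ = (a + γ w) / (s + γ w)` with `s, a, w` the values at `y` of the quadratic forms of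
`S⁻¹, Ŝ⁻¹, W⁻¹`. Inverting the Loewner bounds `c Ŝ ≤ S` and `e W ≤ Ŝ` gives `c s ≤ a` and
`e a ≤ w`, so `s ≤ max 1 (1/c) a`, and the quotient is at least `(1 + γ e) / (max 1 (1/c) + γ e)`
because `t ↦ (1 + γ t) / (m + γ t)` is increasing for `m ≥ 1`.
-/

open Matrix

namespace Matrix

variable {ι : Type*} [Fintype ι]

lemma IsHermitian.dotProduct_mulVec_comm {A : Matrix ι ι ℝ} (hA : A.IsHermitian)
    (u v : ι → ℝ) : u ⬝ᵥ A *ᵥ v = v ⬝ᵥ A *ᵥ u := by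
  have hT : Aᵀ = A := by simpa using hA.eq
  rw [dotProduct_mulVec, ← hT, vecMul_transpose, dotProduct_comm, hT]

lemma dotProduct_add_smul_mulVec (P Q : Matrix ι ι ℝ) (γ : ℝ) (y : ι → ℝ) :
    y ⬝ᵥ (P + γ • Q) *ᵥ y = y ⬝ᵥ P *ᵥ y + γ * (y ⬝ᵥ Q *ᵥ y) := by
  rw [add_mulVec, smul_mulVec, dotProduct_add, dotProduct_smul, smul_eq_mul]

variable [DecidableEq ι]

lemma mulVec_inv_mulVec {A : Matrix ι ι ℝ} (hA : IsUnit A) (y : ι → ℝ) :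
    A *ᵥ (A⁻¹ *ᵥ y) = y := by
  rw [mulVec_mulVec, mul_nonsing_inv _ ((isUnit_iff_isUnit_det A).mp hA), one_mulVec]

/-- Completing the square around `A⁻¹ y`, where equality holds. -/
lemma PosDef.two_mul_dotProduct_sub_le {A : Matrix ι ι ℝ} (hA : A.PosDef) (u y : ι → ℝ) :
    2 * (u ⬝ᵥ y) - u ⬝ᵥ A *ᵥ u ≤ y ⬝ᵥ A⁻¹ *ᵥ y := by
  set v := A⁻¹ *ᵥ y
  have hv : A *ᵥ v = y := mulVec_inv_mulVec hA.isUnit y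
  have hsq : 0 ≤ (u - v) ⬝ᵥ A *ᵥ (u - v) := hA.posSemidef.dotProduct_mulVec_nonneg _
  have hcross : v ⬝ᵥ A *ᵥ u = u ⬝ᵥ y := by rw [hA.isHermitian.dotProduct_mulVec_comm, hv]
  simp only [mulVec_sub, dotProduct_sub, sub_dotProduct, hv, hcross] at hsq
  rw [dotProduct_comm y v]
  linarith

/-- Inversion reverses the Loewner order: test the variational formula for `A⁻¹` at
`u = t • B⁻¹ y`. -/
lemma PosDef.smul_dotProduct_inv_mulVec_le {A B : Matrix ι ι ℝ} (hA : A.PosDef) (hB : IsUnit B)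
    {t : ℝ} (ht : 0 ≤ t) (hAB : ∀ x, t * (x ⬝ᵥ A *ᵥ x) ≤ x ⬝ᵥ B *ᵥ x) (y : ι → ℝ) :
    t * (y ⬝ᵥ B⁻¹ *ᵥ y) ≤ y ⬝ᵥ A⁻¹ *ᵥ y := by
  set v := B⁻¹ *ᵥ y
  have hv : B *ᵥ v = y := mulVec_inv_mulVec hB y
  have hscaled : (t • v) ⬝ᵥ A *ᵥ (t • v) ≤ t * (v ⬝ᵥ y) := by
    rw [mulVec_smul, dotProduct_smul, smul_dotProduct, smul_eq_mul, smul_eq_mul, ← hv]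
    exact mul_le_mul_of_nonneg_left (hAB v) ht
  have hvar := hA.two_mul_dotProduct_sub_le (t • v) y
  rw [smul_dotProduct, smul_eq_mul] at hvar
  rw [dotProduct_comm y v]
  linarith

lemma exists_dotProduct_mulVec_eq_of_mul_inv_mulVec_eq {A B : Matrix ι ι ℝ} (hA : IsUnit A)
    {lam : ℝ} {x : ι → ℝ} (hx : x ≠ 0) (heig : (B * A⁻¹) *ᵥ x = lam • x) :
    ∃ y ≠ 0, y ⬝ᵥ B *ᵥ y = lam * (y ⬝ᵥ A *ᵥ y) := by
  refine ⟨A⁻¹ *ᵥ x, fun h0 => hx ?_, ?_⟩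
  · rw [← mulVec_inv_mulVec hA x, h0, mulVec_zero]
  · rw [mulVec_mulVec, heig, mulVec_inv_mulVec hA, dotProduct_smul, smul_eq_mul]

end Matrix

lemma div_le_add_mul_div_add_mul {m γ e a s w : ℝ} (hm : 1 ≤ m) (hγ : 0 ≤ γ) (he : 0 ≤ e)
    (ha : 0 < a) (hs : 0 < s) (hsa : s ≤ m * a) (hw : e * a ≤ w) :
    (1 + γ * e) / (m + γ * e) ≤ (a + γ * w) / (s + γ * w) := by
  have hw0 : 0 ≤ w := le_trans (by positivity) hw
  calc (1 + γ * e) / (m + γ * e) ≤ (a + γ * w) / (m * a + γ * w) := by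
        rw [div_le_div_iff₀ (by positivity) (by positivity)]
        -- the difference of the cross products is `γ (m - 1) (w - e a)`
        nlinarith [mul_nonneg (mul_nonneg hγ (sub_nonneg.2 hm)) (sub_nonneg.2 hw)]
    _ ≤ (a + γ * w) / (s + γ * w) := by gcongr

theorem stmt_1_general {n : ℕ} (S Shat W : Matrix (Fin n) (Fin n) ℝ)
    (hS : S.PosDef) (hShat : Shat.PosDef) (hW : W.PosDef)
    (c e : ℝ) (hc : 0 < c) (he : 0 < e)
    (h1 : ∀ x : Fin n → ℝ, c * (x ⬝ᵥ Shat.mulVec x) ≤ x ⬝ᵥ S.mulVec x)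
    (h3 : ∀ x : Fin n → ℝ, e * (x ⬝ᵥ W.mulVec x) ≤ x ⬝ᵥ Shat.mulVec x)
    (γ : ℝ) (hγ : 0 ≤ γ)
    (Sγ Shatγ : Matrix (Fin n) (Fin n) ℝ)
    (hSγ : Sγ = (S⁻¹ + γ • W⁻¹)⁻¹) (hShatγ : Shatγ = (Shat⁻¹ + γ • W⁻¹)⁻¹)
    (lam : ℝ) (x : Fin n → ℝ) (hx : x ≠ 0)
    (heig : (Shatγ⁻¹ * Sγ).mulVec x = lam • x) :
    (1 + γ * e) / (max 1 (1 / c) + γ * e) ≤ lam := by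
  have hγW : (γ • W⁻¹).PosSemidef := hW.inv.posSemidef.smul hγ
  have hA : (S⁻¹ + γ • W⁻¹).PosDef := hS.inv.add_posSemidef hγW
  have hB : (Shat⁻¹ + γ • W⁻¹).PosDef := hShat.inv.add_posSemidef hγW
  rw [hSγ, hShatγ, nonsing_inv_nonsing_inv _ ((isUnit_iff_isUnit_det _).mp hB.isUnit)] at heig
  obtain ⟨y, hy, hRayleigh⟩ := exists_dotProduct_mulVec_eq_of_mul_inv_mulVec_eq hA.isUnit hx heig
  have hcs := hShat.smul_dotProduct_inv_mulVec_le hS.isUnit hc.le h1 y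
  have hea := hW.smul_dotProduct_inv_mulVec_le hShat.isUnit he.le h3 y
  rw [dotProduct_add_smul_mulVec, dotProduct_add_smul_mulVec] at hRayleigh
  set s := y ⬝ᵥ S⁻¹ *ᵥ y
  set a := y ⬝ᵥ Shat⁻¹ *ᵥ y
  set w := y ⬝ᵥ W⁻¹ *ᵥ y
  have hs : 0 < s := hS.inv.dotProduct_mulVec_pos hy
  have ha : 0 < a := hShat.inv.dotProduct_mulVec_pos hy
  have hw : 0 < w := hW.inv.dotProduct_mulVec_pos hy
  have hsa : s ≤ max 1 (1 / c) * a :=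
    calc s ≤ 1 / c * a := by rwa [one_div_mul_eq_div, le_div_iff₀' hc]
      _ ≤ max 1 (1 / c) * a := mul_le_mul_of_nonneg_right (le_max_right _ _) ha.le
  calc (1 + γ * e) / (max 1 (1 / c) + γ * e) ≤ (a + γ * w) / (s + γ * w) :=
        div_le_add_mul_div_add_mul (le_max_left _ _) hγ he.le ha hs hsa hea
    _ = lam := by rw [hRayleigh, mul_div_cancel_right₀ _ (by positivity)]

/-- Lower eigenvalue bound for `Shatγ⁻¹ * Sγ` (Lemma 3.1, lower bound, second term). -/
theorem stmt_1 {n : ℕ} (S Shat W : Matrix (Fin n) (Fin n) ℝ)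
    (hS : S.PosDef) (hShat : Shat.PosDef) (hW : W.PosDef)
    (c C e E : ℝ) (hc : 0 < c) (hC : 0 < C) (he : 0 < e) (hE : 0 < E)
    (h1 : ∀ x : Fin n → ℝ, c * (x ⬝ᵥ Shat.mulVec x) ≤ x ⬝ᵥ S.mulVec x)
    (h2 : ∀ x : Fin n → ℝ, x ⬝ᵥ S.mulVec x ≤ C * (x ⬝ᵥ Shat.mulVec x))
    (h3 : ∀ x : Fin n → ℝ, e * (x ⬝ᵥ W.mulVec x) ≤ x ⬝ᵥ Shat.mulVec x)
    (h4 : ∀ x : Fin n → ℝ, x ⬝ᵥ Shat.mulVec x ≤ E * (x ⬝ᵥ W.mulVec x))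
    (γ : ℝ) (hγ : 0 ≤ γ)
    (Sγ Shatγ : Matrix (Fin n) (Fin n) ℝ)
    (hSγ : Sγ = (S⁻¹ + γ • W⁻¹)⁻¹) (hShatγ : Shatγ = (Shat⁻¹ + γ • W⁻¹)⁻¹)
    (lam : ℝ) (x : Fin n → ℝ) (hx : x ≠ 0)
    (heig : (Shatγ⁻¹ * Sγ).mulVec x = lam • x) :
    (1 + γ * e) / (max 1 (1 / c) + γ * e) ≤ lam :=
  stmt_1_general S Shat W hS hShat hW c e hc he h1 h3 γ hγ Sγ Shatγ hSγ hShatγ lam x hx heig
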